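/- arXiv:2410.23380 — 2 statements merged into one kernel-verified Lean document; each statement's English description precedes it below -/
import Mathlib

section
/- For every n ≥ 1, on (ℂ²)^{⊗(n+1)} with qubits labeled 0,…,n one has the telescoping identity ∏_{k=1}^{n} exp(iπ·(1 − Z_{k−1}Z_k)/2) = Z₀ · Z_n. -/
open Complex Matrix

noncomputable section

/-- The operator acting as the 2×2 matrix `M` on the qubit at site `j` of a finite qubit
system and as the identity on all other sites. -/
def localOp {S : Type*} [Fintype S] [DecidableEq S] (j : S)
    (M : Matrix (Fin 2) (Fin 2) ℂ) :
    Matrix (S → Fin 2) (S → Fin 2) ℂ :=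
  Matrix.of fun f g => if ∀ k, k ≠ j → f k = g k then M (f j) (g j) else 0

/-- The Pauli `Z` matrix. -/
def PZ : Matrix (Fin 2) (Fin 2) ℂ := !![1, 0; 0, -1]

/-- Operators on a chain of `n + 1` qubits labeled `0, …, n`. -/
abbrev ChainOp (n : ℕ) := Matrix (Fin (n + 1) → Fin 2) (Fin (n + 1) → Fin 2) ℂ

/-- Pauli `Z` on qubit `j` of the chain. -/
def Zc (n : ℕ) (j : Fin (n + 1)) : ChainOp n := localOp j PZ

/-! Every factor is diagonal in the computational basis, so the identity reduces to one for
the ±1 eigenvalues `s_j` of the `Z_j`: `i^(1 - s) = s` for `s = ±1` turns the `k`-th factor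
into `s_{k-1} s_k`, and since `s_j² = 1` the product `∏_k s_{k-1} s_k` telescopes to
`s_0 s_n`. -/

def zEigenvalue : Fin 2 → ℂ := ![1, -1]

lemma zEigenvalue_mul_self (i : Fin 2) : zEigenvalue i * zEigenvalue i = 1 := by
  fin_cases i <;> simp [zEigenvalue]

lemma PZ_eq_diagonal : PZ = diagonal zEigenvalue := by
  ext a b
  fin_cases a <;> fin_cases b <;> simp [PZ, zEigenvalue]

lemma localOp_diagonal {S : Type*} [Fintype S] [DecidableEq S] (j : S) (d : Fin 2 → ℂ) :
    localOp j (diagonal d) = diagonal fun f => d (f j) := by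
  ext f g
  by_cases hfg : f = g
  · simp [localOp, hfg]
  · have : ¬ ((∀ k, k ≠ j → f k = g k) ∧ f j = g j) := fun ⟨h, hj⟩ =>
      hfg <| funext fun k => if hk : k = j then hk ▸ hj else h k hk
    simp only [localOp, of_apply, diagonal_apply_ne _ hfg, diagonal_apply]
    split_ifs <;> tauto

lemma Zc_eq_diagonal (n : ℕ) (j : Fin (n + 1)) :
    Zc n j = diagonal fun f => zEigenvalue (f j) := by
  rw [Zc, PZ_eq_diagonal, localOp_diagonal]

lemma list_prod_map_diagonal {m ι α : Type*} [Fintype m] [DecidableEq m] [Semiring α]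
    (l : List ι) (d : ι → m → α) :
    (l.map fun k => diagonal (d k)).prod = diagonal fun i => (l.map fun k => d k i).prod := by
  induction l with
  | nil => simp
  | cons a l ih => simp only [List.map_cons, List.prod_cons, ih, diagonal_mul_diagonal]

lemma exp_smul_one_sub_diagonal {m : Type*} [Fintype m] [DecidableEq m] (c : ℂ) (d : m → ℂ) :
    NormedSpace.exp (c • (1 - diagonal d)) = diagonal fun i => cexp (c * (1 - d i)) := by
  rw [← diagonal_one', diagonal_sub, ← diagonal_smul, exp_diagonal]
  congr 1
  funext i
  simp [Complex.exp_eq_exp_ℂ]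

lemma cexp_pi_mul_I_div_two_mul_one_sub {z : ℂ} (hz : z * z = 1) :
    cexp (Real.pi * I / 2 * (1 - z)) = z := by
  rcases mul_self_eq_one_iff.mp hz with rfl | rfl
  · simp
  · rw [show (Real.pi : ℂ) * I / 2 * (1 - -1) = Real.pi * I by ring, exp_pi_mul_I]

lemma Fin.prod_univ_mul_castSucc_succ {M : Type*} [CommMonoid M] {n : ℕ} (g : Fin (n + 1) → M)
    (hg : ∀ k, g k * g k = 1) :
    ∏ k : Fin n, g k.castSucc * g k.succ = g 0 * g (Fin.last n) := by
  induction n with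
  | zero => simp [hg 0]
  | succ n ih =>
    rw [Fin.prod_univ_castSucc]
    simp only [Fin.succ_castSucc]
    rw [ih (fun k => g k.castSucc) fun k => hg _, Fin.castSucc_zero, Fin.succ_last, mul_assoc,
      ← mul_assoc (g (Fin.last n).castSucc), hg, one_mul]

theorem telescoping_iPow_identity_general (n : ℕ) :
    ((List.finRange n).map fun k =>
        NormedSpace.exp (((Real.pi : ℂ) * Complex.I / 2) •
          ((1 : ChainOp n) - Zc n k.castSucc * Zc n k.succ))).prod =
      Zc n 0 * Zc n (Fin.last n) := by
  simp only [Zc_eq_diagonal, diagonal_mul_diagonal, exp_smul_one_sub_diagonal,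
    list_prod_map_diagonal, ← Fin.prod_univ_def]
  congr 1
  funext f
  have hsq (a b : Fin 2) :
      zEigenvalue a * zEigenvalue b * (zEigenvalue a * zEigenvalue b) = 1 := by
    rw [mul_mul_mul_comm, zEigenvalue_mul_self, zEigenvalue_mul_self, one_mul]
  simp only [cexp_pi_mul_I_div_two_mul_one_sub (hsq _ _)]
  exact Fin.prod_univ_mul_castSucc_succ _ fun j => zEigenvalue_mul_self (f j)

/-- For every `n ≥ 1`, on `(ℂ²)^{⊗(n+1)}` with qubits labeled `0,…,n`,
one has the telescoping identity
`∏_{k=1}^{n} exp(iπ·(1 − Z_{k−1}Z_k)/2) = Z₀ · Z_n`. -/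
theorem telescoping_iPow_identity (n : ℕ) (hn : 1 ≤ n) :
    ((List.finRange n).map fun k =>
        NormedSpace.exp (((Real.pi : ℂ) * Complex.I / 2) •
          ((1 : ChainOp n) - Zc n k.castSucc * Zc n k.succ))).prod =
      Zc n 0 * Zc n (Fin.last n) :=
  telescoping_iPow_identity_general n

end
end

section
/- Boundary string identity at a single vertex: on the five-qubit space ℂ² ⊗ (ℂ²)^{⊗4} consisting of the vertex qubit at v and its four incident edge qubits, labeled 1 (edge above v), 2, 3, 4 going clockwise, set A := σ^x_1σ^x_2σ^x_3σ^x_4, Q := τ^x · exp(−iπ·τ^z·(σ^x_1 + σ^x_2 − σ^x_3 − σ^x_4)/4), and F^σ := exp(iπσ^x_1/4)·exp(iπσ^x_2/4)·exp(−iπσ^x_3/4)·exp(−iπσ^x_4/4). Then ((1+A)/2)·Q = ((1+A)/2)·F^σ·τ^x, and the orientation-reversal identity F^σ = A·(F^σ)* holds, so the identity is independent of the orientation of the boundary loop. -/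
open Complex Matrix

noncomputable section

/-- The Pauli `X` matrix. -/
def PX : Matrix (Fin 2) (Fin 2) ℂ := !![0, 1; 1, 0]

/-- Operators on the five-qubit space `ℂ² ⊗ (ℂ²)^{⊗4}` of the vertex qubit (site `0`) and
its four incident edge qubits (sites `1,2,3,4`, labeled with `1` the edge above the vertex
and going clockwise). -/
abbrev Op5 := Matrix (Fin 5 → Fin 2) (Fin 5 → Fin 2) ℂ

/-- `τ^x`, Pauli `X` on the vertex qubit. -/
def tx5 : Op5 := localOp 0 PX

/-- `τ^z`, Pauli `Z` on the vertex qubit. -/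
def tz5 : Op5 := localOp 0 PZ

/-- `σ^x_k`, Pauli `X` on the edge qubit `k ∈ {1,2,3,4}`. -/
def sx5 (k : Fin 5) : Op5 := localOp k PX

/-- The star operator `A := σ^x_1σ^x_2σ^x_3σ^x_4`. -/
def A5 : Op5 := sx5 1 * sx5 2 * sx5 3 * sx5 4

/-- `Q := τ^x · exp(−iπ·τ^z·(σ^x_1 + σ^x_2 − σ^x_3 − σ^x_4)/4)`. -/
def Q5 : Op5 :=
  tx5 * NormedSpace.exp ((-((Real.pi : ℂ) * Complex.I) / 4) •
    (tz5 * (sx5 1 + sx5 2 - sx5 3 - sx5 4)))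

/-- The symmetry-erasing string operator around the dual loop enclosing the vertex:
`F^σ := exp(iπσ^x_1/4)·exp(iπσ^x_2/4)·exp(−iπσ^x_3/4)·exp(−iπσ^x_4/4)`. -/
def Fσ5 : Op5 :=
  NormedSpace.exp (((Real.pi : ℂ) * Complex.I / 4) • sx5 1) *
    NormedSpace.exp (((Real.pi : ℂ) * Complex.I / 4) • sx5 2) *
    NormedSpace.exp ((-((Real.pi : ℂ) * Complex.I) / 4) • sx5 3) *
    NormedSpace.exp ((-((Real.pi : ℂ) * Complex.I) / 4) • sx5 4)

/-!
Write `B = σ^x_1 + σ^x_2 − σ^x_3 − σ^x_4` (`edgeSum5`) and `E c = exp (c B)` (`edgeString5`),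
so that `F^σ = E (iπ/4)` and `(F^σ)* = E (−iπ/4)`. The `σ^x_k` are commuting involutions, so
`exp (c σ) = cosh c + sinh c σ` factor by factor, which gives `E (iπ/2) = A` and `E (iπ) = 1`.
Hence `A (F^σ)* = E (iπ/4) = F^σ`, and `A` swaps `E (iπ/4)` and `E (−iπ/4)`, so that
`(1 + A) E (−iπ/4) = (1 + A) E (iπ/4)`.

The exponent of `Q` is `τ^z X` with `X = −iπB/4`. As `τ^z` is an involution commuting with `X`,
`exp (τ^z X) (1 ± τ^z) = (1 ± τ^z) exp (±X)`; since `1 + A` does not distinguish `exp X` from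
`exp (−X)`, it does not distinguish `exp (τ^z X)` from `exp X` either. Finally `τ^x` commutes
with `A` and with `F^σ`.
-/
open scoped Real

section TensorOp

variable {S ι R : Type*} [Fintype S] [CommSemiring R]

def tensorOp (M : S → Matrix ι ι R) : Matrix (S → ι) (S → ι) R :=
  Matrix.of fun f g => ∏ k, M k (f k) (g k)

theorem tensorOp_mul [Fintype ι] [DecidableEq S] (M N : S → Matrix ι ι R) :
    tensorOp M * tensorOp N = tensorOp (M * N) := by
  ext f g
  simp only [tensorOp, Matrix.mul_apply, Matrix.of_apply, Pi.mul_apply, Fintype.prod_sum,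
    Finset.prod_mul_distrib]

theorem tensorOp_one [DecidableEq ι] : tensorOp (1 : S → Matrix ι ι R) = 1 := by
  ext f g
  simp only [tensorOp, Matrix.of_apply, Pi.one_apply, Matrix.one_apply, Fintype.prod_boole,
    funext_iff]

theorem conjTranspose_tensorOp [StarRing R] (M : S → Matrix ι ι R) :
    (tensorOp M)ᴴ = tensorOp fun k => (M k)ᴴ := by
  ext f g
  simp [tensorOp, Matrix.conjTranspose_apply, star_prod]

end TensorOp

theorem localOp_eq_tensorOp {S : Type*} [Fintype S] [DecidableEq S] (j : S)
    (M : Matrix (Fin 2) (Fin 2) ℂ) : localOp j M = tensorOp (Pi.mulSingle j M) := by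
  ext f g
  rw [tensorOp, Matrix.of_apply, ← Finset.mul_prod_erase _ _ (Finset.mem_univ j),
    Finset.prod_congr rfl fun k hk => by
      rw [Pi.mulSingle_eq_of_ne (Finset.ne_of_mem_erase hk), Matrix.one_apply],
    Finset.prod_boole, localOp, Matrix.of_apply, Pi.mulSingle_eq_same, mul_ite, mul_one, mul_zero]
  simp only [Finset.mem_erase, Finset.mem_univ, and_true]

section LocalOp

variable {S : Type*} [Fintype S] [DecidableEq S]

theorem localOp_mul_localOp (j : S) (M N : Matrix (Fin 2) (Fin 2) ℂ) :
    localOp j M * localOp j N = localOp j (M * N) := by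
  rw [localOp_eq_tensorOp, localOp_eq_tensorOp, localOp_eq_tensorOp, tensorOp_mul,
    Pi.mulSingle_mul]

theorem localOp_one (j : S) : localOp j (1 : Matrix (Fin 2) (Fin 2) ℂ) = 1 := by
  rw [localOp_eq_tensorOp, Pi.mulSingle_one, tensorOp_one]

theorem localOp_commute {j k : S} (hjk : j ≠ k) (M N : Matrix (Fin 2) (Fin 2) ℂ) :
    Commute (localOp j M) (localOp k N) := by
  simp only [Commute, SemiconjBy, localOp_eq_tensorOp, tensorOp_mul,
    (Pi.mulSingle_commute (f := fun _ => Matrix (Fin 2) (Fin 2) ℂ) hjk M N).eq]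

theorem conjTranspose_localOp (j : S) (M : Matrix (Fin 2) (Fin 2) ℂ) :
    (localOp j M)ᴴ = localOp j Mᴴ := by
  rw [localOp_eq_tensorOp, localOp_eq_tensorOp, conjTranspose_tensorOp]
  exact congrArg tensorOp <| funext <|
    Pi.apply_mulSingle (fun _ => Matrix.conjTranspose) (fun _ => Matrix.conjTranspose_one) j M

end LocalOp

theorem eq_of_mul_one_add_eq_of_mul_one_sub_eq {R : Type*} [Ring R] [Algebra ℚ R] {x y Z : R}
    (hplus : x * (1 + Z) = y * (1 + Z)) (hminus : x * (1 - Z) = y * (1 - Z)) : x = y := by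
  have htwo : x * 2 = y * 2 := by
    calc x * 2 = x * (1 + Z) + x * (1 - Z) := by noncomm_ring
      _ = y * 2 := by rw [hplus, hminus]; noncomm_ring
  have hunit : IsUnit (2 : R) := by
    simpa only [map_ofNat] using (IsUnit.mk0 (2 : ℚ) two_ne_zero).map (algebraMap ℚ R)
  exact hunit.mul_right_cancel htwo

section Exp

variable {𝔸 : Type*} [NormedRing 𝔸] [CompleteSpace 𝔸]

theorem exp_mul_mul_one_add [NormedAlgebra ℚ 𝔸] {Z X : 𝔸} (hZ : Z * Z = 1)
    (hZX : Commute Z X) :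
    NormedSpace.exp (Z * X) * (1 + Z) = (1 + Z) * NormedSpace.exp X := by
  have hZXZ : Z * X * Z = X := by rw [hZX.eq, mul_assoc, hZ, mul_one]
  refine (SemiconjBy.exp_right ?_).eq.symm
  change (1 + Z) * X = Z * X * (1 + Z)
  rw [add_mul, mul_add, one_mul, mul_one, hZXZ, add_comm]

theorem exp_mul_mul_one_sub [NormedAlgebra ℚ 𝔸] {Z X : 𝔸} (hZ : Z * Z = 1)
    (hZX : Commute Z X) :
    NormedSpace.exp (Z * X) * (1 - Z) = (1 - Z) * NormedSpace.exp (-X) := by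
  simpa only [neg_mul_neg, ← sub_eq_add_neg] using
    exp_mul_mul_one_add (Z := -Z) (X := -X) (by rwa [neg_mul_neg]) hZX.neg_left.neg_right

theorem mul_exp_mul_of_mul_self_eq_one [NormedAlgebra ℚ 𝔸] {C Z X : 𝔸} (hZ : Z * Z = 1)
    (hZX : Commute Z X) (hCZ : Commute C Z)
    (hC : C * NormedSpace.exp (-X) = C * NormedSpace.exp X) :
    C * NormedSpace.exp (Z * X) = C * NormedSpace.exp X := by
  have hZeX : Commute Z (NormedSpace.exp X) := hZX.exp_right
  refine eq_of_mul_one_add_eq_of_mul_one_sub_eq (Z := Z) ?_ ?_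
  · rw [mul_assoc, exp_mul_mul_one_add hZ hZX, ((Commute.one_left _).add_left hZeX).eq, mul_assoc]
  · calc C * NormedSpace.exp (Z * X) * (1 - Z)
        = (1 - Z) * (C * NormedSpace.exp (-X)) := by
          rw [mul_assoc, exp_mul_mul_one_sub hZ hZX, ← mul_assoc, ← mul_assoc,
            ((Commute.one_right C).sub_right hCZ).eq]
      _ = C * NormedSpace.exp X * (1 - Z) := by
          rw [hC, ← mul_assoc, ← ((Commute.one_right C).sub_right hCZ).eq, mul_assoc, mul_assoc,
            ((Commute.one_left _).sub_left hZeX).eq]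

theorem exp_smul_of_mul_self_eq_one [NormedAlgebra ℂ 𝔸] {P : 𝔸} (hP : P * P = 1) (c : ℂ) :
    NormedSpace.exp (c • P) = cosh c • 1 + sinh c • P := by
  let +nondep : NormedAlgebra ℚ 𝔸 := .restrictScalars ℚ ℂ 𝔸
  have hexp (d : ℂ) : NormedSpace.exp (algebraMap ℂ 𝔸 d) = algebraMap ℂ 𝔸 (exp d) := by
    rw [Complex.exp_eq_exp_ℂ, NormedSpace.algebraMap_exp_comm]
  have hcP : c • P = P * algebraMap ℂ 𝔸 c := by rw [Algebra.smul_def, Algebra.commutes]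
  refine eq_of_mul_one_add_eq_of_mul_one_sub_eq (Z := P) ?_ ?_
  · rw [hcP, exp_mul_mul_one_add hP (Algebra.commute_algebraMap_right c P), hexp,
      ← Algebra.commutes, ← Algebra.smul_def, ← cosh_add_sinh]
    simp only [add_mul, mul_add, smul_mul_assoc, one_mul, mul_one, hP]
    module
  · rw [hcP, exp_mul_mul_one_sub hP (Algebra.commute_algebraMap_right c P), ← map_neg, hexp,
      ← Algebra.commutes, ← Algebra.smul_def, ← cosh_sub_sinh]
    simp only [add_mul, mul_sub, smul_mul_assoc, one_mul, mul_one, hP]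
    module

end Exp

theorem sx5_mul_self (k : Fin 5) : sx5 k * sx5 k = 1 := by
  rw [sx5, localOp_mul_localOp, PX, Matrix.mul_fin_two, ← localOp_one k, Matrix.one_fin_two]
  norm_num

theorem tz5_mul_self : tz5 * tz5 = 1 := by
  rw [tz5, localOp_mul_localOp, PZ, Matrix.mul_fin_two, ← localOp_one (0 : Fin 5),
    Matrix.one_fin_two]
  norm_num

theorem sx5_commute (j k : Fin 5) : Commute (sx5 j) (sx5 k) := by
  obtain rfl | hjk := eq_or_ne j k
  · exact Commute.refl _
  · exact localOp_commute hjk _ _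

theorem sx5_commute_tx5 {k : Fin 5} (hk : k ≠ 0) : Commute (sx5 k) tx5 :=
  localOp_commute hk _ _

theorem sx5_commute_tz5 {k : Fin 5} (hk : k ≠ 0) : Commute (sx5 k) tz5 :=
  localOp_commute hk _ _

theorem conjTranspose_sx5 (k : Fin 5) : (sx5 k)ᴴ = sx5 k := by
  rw [sx5, conjTranspose_localOp]
  congr 1
  ext i j
  fin_cases i <;> fin_cases j <;> simp [PX]

theorem A5_commute_of_sx5_commute {T : Op5} (h : ∀ k : Fin 5, k ≠ 0 → Commute (sx5 k) T) :
    Commute A5 T :=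
  (((h 1 (by decide)).mul_left (h 2 (by decide))).mul_left (h 3 (by decide))).mul_left
    (h 4 (by decide))

def edgeSum5 : Op5 := sx5 1 + sx5 2 - sx5 3 - sx5 4

theorem edgeSum5_commute_of_sx5_commute {T : Op5}
    (h : ∀ k : Fin 5, k ≠ 0 → Commute (sx5 k) T) :
    Commute edgeSum5 T :=
  (((h 1 (by decide)).add_left (h 2 (by decide))).sub_left (h 3 (by decide))).sub_left
    (h 4 (by decide))

theorem conjTranspose_edgeSum5 : edgeSum5ᴴ = edgeSum5 := by
  simp only [edgeSum5, Matrix.conjTranspose_sub, Matrix.conjTranspose_add, conjTranspose_sx5]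

def edgeString5 (c : ℂ) : Op5 := NormedSpace.exp (c • edgeSum5)

theorem edgeString5_commute_tx5 (c : ℂ) : Commute (edgeString5 c) tx5 :=
  ((edgeSum5_commute_of_sx5_commute fun _ => sx5_commute_tx5).smul_left c).exp_left

theorem conjTranspose_edgeString5 (c : ℂ) : (edgeString5 c)ᴴ = edgeString5 (star c) := by
  rw [edgeString5, edgeString5, ← Matrix.exp_conjTranspose, Matrix.conjTranspose_smul,
    conjTranspose_edgeSum5]

theorem edgeString5_add (c d : ℂ) : edgeString5 (c + d) = edgeString5 c * edgeString5 d := by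
  rw [edgeString5, add_smul,
    Matrix.exp_add_of_commute _ _ (((Commute.refl _).smul_left _).smul_right _)]
  rfl

theorem edgeString5_eq_prod_exp (c : ℂ) :
    edgeString5 c = NormedSpace.exp (c • sx5 1) * NormedSpace.exp (c • sx5 2) *
      NormedSpace.exp (-c • sx5 3) * NormedSpace.exp (-c • sx5 4) := by
  have hsplit : c • edgeSum5 = c • sx5 1 + c • sx5 2 + -c • sx5 3 + -c • sx5 4 := by
    rw [edgeSum5]; module
  have hc (j k : Fin 5) (a b : ℂ) : Commute (a • sx5 j) (b • sx5 k) :=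
    ((sx5_commute j k).smul_left a).smul_right b
  rw [edgeString5, hsplit, Matrix.exp_add_of_commute _ _, Matrix.exp_add_of_commute _ _,
    Matrix.exp_add_of_commute _ _]
  · exact hc 1 2 _ _
  · exact (hc 1 3 _ _).add_left (hc 2 3 _ _)
  · exact ((hc 1 4 _ _).add_left (hc 2 4 _ _)).add_left (hc 3 4 _ _)

open scoped Matrix.Norms.Operator in
theorem exp_smul_sx5 (c : ℂ) (k : Fin 5) :
    NormedSpace.exp (c • sx5 k) = cosh c • 1 + sinh c • sx5 k :=
  exp_smul_of_mul_self_eq_one (sx5_mul_self k) c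

open scoped Matrix.Norms.Operator in
theorem mul_exp_tz5_mul_smul_edgeSum5 {C : Op5} (hC : Commute C tz5) (c : ℂ)
    (h : C * NormedSpace.exp (-(c • edgeSum5)) = C * edgeString5 c) :
    C * NormedSpace.exp (tz5 * (c • edgeSum5)) = C * edgeString5 c :=
  mul_exp_mul_of_mul_self_eq_one tz5_mul_self
    ((edgeSum5_commute_of_sx5_commute fun _ => sx5_commute_tz5).symm.smul_right c) hC h

theorem edgeString5_pi_div_two : edgeString5 (π / 2 * I) = A5 := by
  have hcosh : cosh (π / 2 * I) = 0 := by rw [cosh_mul_I, cos_pi_div_two]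
  have hsinh : sinh (π / 2 * I) = I := by rw [sinh_mul_I, sin_pi_div_two, one_mul]
  simp only [edgeString5_eq_prod_exp, exp_smul_sx5, cosh_neg, sinh_neg, hcosh, hsinh]
  simp only [zero_smul, zero_add, neg_smul, neg_mul, mul_neg, smul_mul_assoc, mul_smul_comm, A5]
  match_scalars
  linear_combination (I ^ 2 - 1) * I_sq

theorem edgeString5_pi : edgeString5 (π * I) = 1 := by
  have hcosh : cosh (π * I) = -1 := by rw [cosh_mul_I, cos_pi]
  have hsinh : sinh (π * I) = 0 := by rw [sinh_mul_I, sin_pi, zero_mul]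
  simp only [edgeString5_eq_prod_exp, exp_smul_sx5, cosh_neg, sinh_neg, hcosh, hsinh]
  simp only [zero_smul, add_zero, neg_zero, neg_smul, one_smul, mul_neg, neg_neg, mul_one]

theorem Fσ5_eq_edgeString5 : Fσ5 = edgeString5 (π * I / 4) := by
  rw [Fσ5, edgeString5_eq_prod_exp, neg_div]

theorem A5_mul_edgeString5 (c : ℂ) : A5 * edgeString5 c = edgeString5 (π / 2 * I + c) := by
  rw [edgeString5_add, edgeString5_pi_div_two]

theorem one_add_A5_mul_edgeString5_neg :
    (1 + A5) * edgeString5 (-(π * I / 4)) = (1 + A5) * edgeString5 (π * I / 4) := by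
  have hsub : π / 2 * I + -(π * I / 4) = π * I / 4 := by ring
  have hadd : π / 2 * I + π * I / 4 = π * I + -(π * I / 4) := by ring
  rw [add_mul, add_mul, one_mul, one_mul, A5_mul_edgeString5, A5_mul_edgeString5, hsub, hadd,
    edgeString5_add, edgeString5_pi, one_mul, add_comm]

theorem Q5_eq_tx5_mul_exp : Q5 = tx5 * NormedSpace.exp (tz5 * (-(π * I / 4) • edgeSum5)) := by
  rw [Q5, edgeSum5, mul_smul_comm, neg_div]

theorem one_add_A5_mul_exp_tz5_smul_edgeSum5 :
    (1 + A5) * NormedSpace.exp (tz5 * (-(π * I / 4) • edgeSum5)) = (1 + A5) * Fσ5 := by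
  rw [Fσ5_eq_edgeString5, ← one_add_A5_mul_edgeString5_neg]
  refine mul_exp_tz5_mul_smul_edgeSum5
    ((Commute.one_left _).add_left (A5_commute_of_sx5_commute fun _ => sx5_commute_tz5)) _ ?_
  rw [neg_smul, neg_neg]
  exact one_add_A5_mul_edgeString5_neg.symm

/-- **boundary string identity at a single vertex.**
`((1+A)/2)·Q = ((1+A)/2)·F^σ·τ^x`, together with the orientation-reversal identity
`F^σ = A·(F^σ)*`, so the identity is independent of the orientation of the boundary loop. -/
theorem boundary_string_identity_single_vertex :
    ((2 : ℂ)⁻¹ • ((1 : Op5) + A5)) * Q5 = ((2 : ℂ)⁻¹ • ((1 : Op5) + A5)) * Fσ5 * tx5 ∧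
      Fσ5 = A5 * Fσ5ᴴ := by
  have hF := Fσ5_eq_edgeString5
  have hA_tx : Commute (1 + A5) tx5 :=
    (Commute.one_left _).add_left (A5_commute_of_sx5_commute fun _ => sx5_commute_tx5)
  refine ⟨?_, ?_⟩
  · rw [smul_mul_assoc, smul_mul_assoc, smul_mul_assoc, Q5_eq_tx5_mul_exp]
    congr 1
    calc (1 + A5) * (tx5 * NormedSpace.exp (tz5 * (-(π * I / 4) • edgeSum5)))
        = tx5 * ((1 + A5) * Fσ5) := by
          rw [← mul_assoc, hA_tx.eq, mul_assoc, one_add_A5_mul_exp_tz5_smul_edgeSum5]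
      _ = (1 + A5) * Fσ5 * tx5 := (hA_tx.mul_left (hF ▸ edgeString5_commute_tx5 _)).eq.symm
  · have hstar : star (π * I / 4) = -(π * I / 4) := by
      simp only [star_div₀, star_mul', RCLike.star_def, conj_ofReal, conj_I, mul_neg, star_ofNat]
      ring
    rw [hF, conjTranspose_edgeString5, hstar, A5_mul_edgeString5]
    congr 1
    ring

end
end
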